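/- Let m ≥ 3 be odd with s = max{v₂(m+1), v₂(m−1)}. Then for every n ≥ 2 and every odd t ∈ ℤ₂, the 2-adic valuation of T_m(−1 + 2^n t) − (−1 + 2^n t) equals s + n + 1. -/

import Mathlib

/-!
Write `m = 2d + 3` and `x = -1 + 2ⁿt`. The product formula
`T_{a+b} - T_{a-b} = 2 (X² - 1) U_{a-1} U_{b-1}` gives
`T_m(x) - x = 2 (x + 1)(x - 1) U_{d+1}(x) U_d(x)`, where `x + 1 = 2ⁿt` and `x - 1 = 2 · unit`
because `n ≥ 2`. Since `x ≡ -1 (mod 2)`, `U_{k-1}(x)` is `2^{v₂ k}` times a unit: for odd `k` it is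
congruent to `U_{k-1}(-1) = ±k`, and the doubling formula `U_{2j-1} = 2 T_j U_{j-1}`, with
`T_j(x) ≡ T_j(-1) = ±1`, adds one factor `2` each time `k` is doubled. One of `d + 1`, `d + 2`
is odd, so `1 + v₂(d + 1) + v₂(d + 2) = s`.
-/

open Polynomial Polynomial.Chebyshev IsLocalRing

namespace Polynomial.Chebyshev

variable (R : Type*) [CommRing R]

theorem two_mul_T_mul_U (m k : ℤ) : 2 * T R m * U R k = U R (k + m) + U R (k - m) := by
  induction m using Polynomial.Chebyshev.induct with
  | zero => simp [two_mul]
  | one =>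
    rw [T_one]
    linear_combination -U_add_one R k
  | add_two m ih1 ih2 =>
    linear_combination (norm := ring_nf) 2 * U R k * T_add_two R m + 2 * (X : R[X]) * ih1 - ih2
      - U_add_two R (k + m) - U_sub_two R (k - m)
  | neg_add_one m ih1 ih2 =>
    linear_combination (norm := ring_nf) 2 * U R k * T_sub_one R (-m) + 2 * (X : R[X]) * ih1 - ih2
      - U_sub_two R (k - m + 1) - U_add_two R (k + m - 1)

theorem U_two_mul_sub_one (j : ℤ) : U R (2 * j - 1) = 2 * T R j * U R (j - 1) := by
  rw [two_mul_T_mul_U, show j - 1 - j = -1 by ring, U_neg_one, add_zero]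
  ring_nf

theorem T_add_sub_T_sub (a b : ℤ) :
    T R (a + b) - T R (a - b) = 2 * (X ^ 2 - 1) * U R (a - 1) * U R (b - 1) := by
  induction b using Polynomial.Chebyshev.induct with
  | zero => simp
  | one =>
    rw [sub_self, U_zero]
    linear_combination (norm := ring_nf)
      -T_sub_one R a + 2 * one_sub_X_sq_mul_U_eq_pol_in_T R (a - 1)
  | add_two b ih1 ih2 =>
    linear_combination (norm := ring_nf) T_add_two R (a + b) - T_sub_two R (a - b)
      + 2 * (X : R[X]) * ih1 - ih2 - 2 * (X ^ 2 - 1 : R[X]) * U R (a - 1) * U_add_two R (b - 1)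
  | neg_add_one b ih1 ih2 =>
    linear_combination (norm := ring_nf) T_sub_one R (a - b) - T_add_one R (a + b)
      + 2 * (X : R[X]) * ih1 - ih2 - 2 * (X ^ 2 - 1 : R[X]) * U R (a - 1) * U_sub_two R (-b)

theorem T_two_mul_add_three_sub_X (d : ℕ) :
    T R (2 * d + 3) - X = 2 * (X ^ 2 - 1) * U R (d + 1) * U R d := by
  have h := T_add_sub_T_sub R (d + 2) (d + 1)
  rw [show (d + 2 : ℤ) - (d + 1) = 1 by ring, T_one] at h
  convert h using 3 <;> ring_nf

end Polynomial.Chebyshev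

theorem padicValNat_two_pow_mul_of_odd {a b : ℕ} (hb : Odd b) : padicValNat 2 (2 ^ a * b) = a := by
  rw [padicValNat.mul (by positivity) (by rintro rfl; simp at hb), padicValNat.prime_pow,
    padicValNat.eq_zero_of_not_dvd hb.not_two_dvd_nat, add_zero]

theorem min_padicValNat_self_succ (p : ℕ) [Fact p.Prime] (c : ℕ) :
    min (padicValNat p c) (padicValNat p (c + 1)) = 0 := by
  by_contra h
  have hc : p ∣ c := dvd_of_one_le_padicValNat (by omega)
  have hc1 : p ∣ c + 1 := dvd_of_one_le_padicValNat (by omega)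
  exact (Fact.out : p.Prime).one_lt.ne' (Nat.dvd_one.mp ((Nat.dvd_add_right hc).mp hc1))

theorem max_padicValNat_two_mul_add_four (d : ℕ) :
    max (padicValNat 2 (2 * d + 4)) (padicValNat 2 (2 * d + 2)) =
      1 + padicValNat 2 (d + 1) + padicValNat 2 (d + 2) := by
  have h : min (padicValNat 2 (d + 1)) (padicValNat 2 (d + 2)) = 0 :=
    min_padicValNat_self_succ 2 (d + 1)
  rw [show 2 * d + 4 = 2 * (d + 2) by ring, show 2 * d + 2 = 2 * (d + 1) by ring,
    padicValNat.mul two_ne_zero (by omega), padicValNat.mul two_ne_zero (by omega),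
    padicValNat.self one_lt_two]
  omega

namespace IsLocalRing

variable {R : Type*} [CommRing R] [IsLocalRing R]

theorem isUnit_of_sub_mem_maximalIdeal {a b : R} (h : a - b ∈ maximalIdeal R) (hb : IsUnit b) :
    IsUnit a := by
  by_contra ha
  rw [← notMem_maximalIdeal] at hb ha
  exact hb (by simpa using sub_mem (not_not.mp ha) h)

theorem isUnit_eval_of_isUnit_eval_neg_one {x : R} (hx : x + 1 ∈ maximalIdeal R) {P : R[X]}
    (hP : IsUnit (P.eval (-1))) : IsUnit (P.eval x) :=
  isUnit_of_sub_mem_maximalIdeal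
    (Ideal.mem_of_dvd _ (by simpa using sub_dvd_eval_sub x (-1) P) hx) hP

theorem isUnit_intCast_of_odd (h2 : (2 : R) ∈ maximalIdeal R) {b : ℤ} (hb : Odd b) :
    IsUnit (b : R) := by
  obtain ⟨j, rfl⟩ := hb
  refine isUnit_of_sub_mem_maximalIdeal (b := 1) ?_ isUnit_one
  simpa using Ideal.mul_mem_right (j : R) _ h2

end IsLocalRing

namespace Polynomial.Chebyshev

variable {R : Type*} [CommRing R] [IsLocalRing R]

theorem exists_isUnit_eval_U_two_pow_mul_sub_one (h2 : (2 : R) ∈ maximalIdeal R) {x : R}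
    (hx : x + 1 ∈ maximalIdeal R) {b : ℤ} (hb : Odd b) (a : ℕ) :
    ∃ u, IsUnit u ∧ (U R (2 ^ a * b - 1)).eval x = 2 ^ a * u := by
  induction a with
  | zero =>
    refine ⟨_, isUnit_eval_of_isUnit_eval_neg_one (P := U R (b - 1)) hx ?_, by simp⟩
    rw [U_eval_neg_one, Int.cast_sub, Int.cast_one, sub_add_cancel]
    exact ((b - 1).negOnePow.isUnit.map (Int.castRingHom R)).mul (isUnit_intCast_of_odd h2 hb)
  | succ a ih =>
    obtain ⟨u, hu, hU⟩ := ih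
    have hT : IsUnit ((T R (2 ^ a * b)).eval x) := by
      refine isUnit_eval_of_isUnit_eval_neg_one hx ?_
      rw [T_eval_neg_one]
      exact (2 ^ a * b).negOnePow.isUnit.map (Int.castRingHom R)
    refine ⟨_, hT.mul hu, ?_⟩
    rw [pow_succ', mul_assoc, U_two_mul_sub_one, eval_mul, eval_mul, hU, eval_ofNat]
    ring

theorem exists_isUnit_eval_U_eq_two_pow_mul (h2 : (2 : R) ∈ maximalIdeal R) {x : R}
    (hx : x + 1 ∈ maximalIdeal R) (k : ℕ) :
    ∃ u, IsUnit u ∧ (U R k).eval x = 2 ^ padicValNat 2 (k + 1) * u := by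
  obtain ⟨a, b, hb, hk⟩ := Nat.exists_eq_two_pow_mul_odd (n := k + 1) (by omega)
  have hidx : (k : ℤ) = 2 ^ a * b - 1 := by rw [eq_sub_iff_add_eq]; exact_mod_cast hk
  rw [hidx, hk, padicValNat_two_pow_mul_of_odd hb]
  exact exists_isUnit_eval_U_two_pow_mul_sub_one h2 hx hb.natCast a

end Polynomial.Chebyshev

namespace PadicInt

variable {p : ℕ} [Fact p.Prime]

theorem valuation_of_isUnit {u : ℤ_[p]} (hu : IsUnit u) : u.valuation = 0 := by
  obtain ⟨v, hv⟩ := hu.exists_right_inv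
  have h := valuation_mul hu.ne_zero (right_ne_zero_of_mul_eq_one hv)
  rw [hv, valuation_one] at h
  omega

theorem valuation_p_pow_mul_of_isUnit (k : ℕ) {u : ℤ_[p]} (hu : IsUnit u) :
    ((p : ℤ_[p]) ^ k * u).valuation = k := by
  rw [valuation_p_pow_mul k u hu.ne_zero, valuation_of_isUnit hu, add_zero]

theorem isUnit_iff_not_dvd {z : ℤ_[p]} : IsUnit z ↔ ¬(p : ℤ_[p]) ∣ z := by
  rw [← IsLocalRing.notMem_maximalIdeal, maximalIdeal_eq_span_p, Ideal.mem_span_singleton]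

end PadicInt

theorem chebyshev_valuation_near_neg_one (m : ℕ) (hm : 3 ≤ m) (hodd : Odd m)
    (s : ℕ) (hs : s = max (padicValNat 2 (m + 1)) (padicValNat 2 (m - 1)))
    (n : ℕ) (hn : 2 ≤ n) (t : ℤ_[2]) (ht : ¬ (2 : ℤ_[2]) ∣ t) :
    ((Polynomial.Chebyshev.T ℤ_[2] m).eval (-1 + 2 ^ n * t) - (-1 + 2 ^ n * t)).valuation
      = (s : ℤ) + (n : ℤ) + 1 := by
  obtain ⟨d, rfl⟩ : ∃ d, m = 2 * d + 3 := by obtain ⟨c, rfl⟩ := hodd; exact ⟨c - 1, by omega⟩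
  obtain ⟨k, rfl⟩ : ∃ k, n = k + 1 := ⟨n - 1, by omega⟩
  set x : ℤ_[2] := -1 + 2 ^ (k + 1) * t
  have h2 : (2 : ℤ_[2]) ∈ maximalIdeal ℤ_[2] := by simpa using PadicInt.p_nonunit (p := 2)
  have hx : x + 1 ∈ maximalIdeal ℤ_[2] := Ideal.mem_of_dvd _ ⟨2 ^ k * t, by ring⟩ h2
  have ht_unit : IsUnit t := PadicInt.isUnit_iff_not_dvd.mpr (by exact_mod_cast ht)
  have hw : IsUnit (2 ^ k * t - 1 : ℤ_[2]) :=
    isUnit_of_sub_mem_maximalIdeal (b := -1) (by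
      simpa using Ideal.mem_of_dvd _ (dvd_mul_of_dvd_left (dvd_pow_self 2 (by omega)) t) h2)
      isUnit_one.neg
  obtain ⟨u₁, hu₁, hU₁⟩ := exists_isUnit_eval_U_eq_two_pow_mul h2 hx (d + 1)
  obtain ⟨u₀, hu₀, hU₀⟩ := exists_isUnit_eval_U_eq_two_pow_mul h2 hx d
  have key : (T ℤ_[2] (2 * d + 3)).eval x - x =
      ((2 : ℕ) : ℤ_[2]) ^ (k + padicValNat 2 (d + 2) + padicValNat 2 (d + 1) + 3) *
        (t * (2 ^ k * t - 1) * u₁ * u₀) := by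
    have h := congrArg (eval x) (T_two_mul_add_three_sub_X ℤ_[2] d)
    push_cast at hU₁
    rw [show d + 1 + 1 = d + 2 from rfl] at hU₁
    simp only [eval_sub, eval_mul, eval_pow, eval_X, eval_one, eval_ofNat, hU₁, hU₀] at h
    rw [h, Nat.cast_ofNat]
    ring
  push_cast
  rw [key, PadicInt.valuation_p_pow_mul_of_isUnit _ (((ht_unit.mul hw).mul hu₁).mul hu₀), hs,
    show 2 * d + 3 + 1 = 2 * d + 4 by ring, show 2 * d + 3 - 1 = 2 * d + 2 by omega,
    max_padicValNat_two_mul_add_four]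
  push_cast
  ring
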